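/- Let 1 ≤ d < p, let φ : ℝ^d → ℝ^{p−d} be three times continuously differentiable on a neighborhood of 0 with φ(0) = 0 and Dφ(0) = 0, and let P : ℝ^d → ℝ be twice continuously differentiable on a neighborhood of 0. For u ∈ ℝ^d write v(u) := (u, φ(u)) ∈ ℝ^p, and for h > 0 small define C_h := ∫_{‖u‖ ≤ h} v(u)·v(u)ᵀ·P(u) du ∈ ℝ^{p×p}. Then, as h → 0⁺, C_h = (|S^{d-1}|·P(0)/(d(d+2)))·h^{d+2}·J + O(h^{d+4}), where J ∈ ℝ^{p×p} is the diagonal matrix whose first d diagonal entries are 1 and whose remaining p−d diagonal entries are 0; in particular, the top-left d×d block of C_h is (|S^{d-1}|·P(0)/(d(d+2)))·h^{d+2}·I_{d×d} + O(h^{d+4}), while the off-diagonal d×(p−d) block and the bottom-right (p−d)×(p−d) block are both O(h^{d+4}). -/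

import Mathlib

open Asymptotics Filter Topology MeasureTheory Metric

/-- The surface measure `|S^{d-1}|` of the unit sphere in `ℝ^d`. -/
noncomputable def sphereArea (d : ℕ) : ℝ :=
  (((volume : Measure (EuclideanSpace ℝ (Fin d))).toSphere) Set.univ).toReal

/-!
The reflection `u ↦ -u` preserves the ball, so the integral of each entry only sees the even
part of its integrand, and an integrand that is `O(‖u‖ ^ k)` contributes `O(h ^ (d + k))`.
Tangent–tangent: the even part of `uᵢ uⱼ P(u)` is `uᵢ uⱼ (P(0) + O(‖u‖²))`, and the second
moments of the ball are `∫ uᵢ uⱼ = δᵢⱼ |S^{d-1}| h^{d+2} / (d (d+2))` by symmetry under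
coordinate reflections and permutations together with polar coordinates.
Tangent–normal: the even part of `uᵢ φⱼ(u) P(u)` is `uᵢ` times the odd part of `φⱼ P`, which is
`O(‖u‖³)` since `φ(u) - φ(-u) = O(‖u‖³)` and `φ(u) = O(‖u‖²)` when `Dφ(0) = 0`.
Normal–normal: `φᵢ φⱼ P = O(‖u‖⁴)` outright.
-/

open Module (finrank)

section Taylor

variable {E F : Type*} [NormedAddCommGroup E] [NormedSpace ℝ E] [NormedAddCommGroup F]
  [NormedSpace ℝ F]

theorem isBigO_sub_sub_fderiv_of_isBigO {f : E → F} {f' : E → E →L[ℝ] F} {k : ℕ}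
    (hf : ∀ᶠ x in 𝓝 0, HasFDerivAt f (f' x) x)
    (hf' : (fun x => f' x - f' 0) =O[𝓝 0] fun x => ‖x‖ ^ k) :
    (fun x => f x - f 0 - f' 0 x) =O[𝓝 0] fun x => ‖x‖ ^ (k + 1) := by
  obtain ⟨C, hC, hCf'⟩ := hf'.exists_nonneg
  obtain ⟨ε, hε, hball⟩ := Metric.eventually_nhds_iff_ball.1 (hf.and hCf'.bound)
  refine .of_bound C (eventually_of_mem (ball_mem_nhds 0 hε) fun x hx => ?_)
  have hsub : closedBall (0 : E) ‖x‖ ⊆ ball 0 ε :=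
    closedBall_subset_ball (by simpa using hx)
  have hderiv : ∀ y ∈ closedBall (0 : E) ‖x‖,
      HasFDerivWithinAt (fun y => f y - f 0 - f' 0 y) (f' y - f' 0) (closedBall 0 ‖x‖) y :=
    fun y hy => (((hball y (hsub hy)).1.sub_const _).sub (f' 0).hasFDerivAt).hasFDerivWithinAt
  have hbound : ∀ y ∈ closedBall (0 : E) ‖x‖, ‖f' y - f' 0‖ ≤ C * ‖x‖ ^ k := fun y hy =>
    ((hball y (hsub hy)).2).trans (by
      rw [norm_pow, norm_norm]
      gcongr
      simpa using hy)
  have := (convex_closedBall (0 : E) ‖x‖).norm_image_sub_le_of_norm_hasFDerivWithin_le hderiv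
    hbound (mem_closedBall_self (norm_nonneg x)) (mem_closedBall_zero_iff.2 le_rfl)
  simpa [pow_succ, mul_assoc] using this

theorem ContDiffAt.isBigO_sub_sub_fderiv {f : E → F} (hf : ContDiffAt ℝ 2 f 0) :
    (fun x => f x - f 0 - fderiv ℝ f 0 x) =O[𝓝 0] fun x => ‖x‖ ^ 2 := by
  refine isBigO_sub_sub_fderiv_of_isBigO ?_ ?_
  · filter_upwards [hf.eventually (by simp)] with x hx
    exact (hx.differentiableAt (by simp)).hasFDerivAt
  · have := ((hf.fderiv_right (m := 1) (by norm_num)).differentiableAt one_ne_zero).isBigO_sub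
    simpa using this.norm_right

theorem ContDiffAt.isBigO_add_comp_neg_sub {f : E → F} (hf : ContDiffAt ℝ 2 f 0) :
    (fun x => f x + f (-x) - (2 : ℝ) • f 0) =O[𝓝 0] fun x => ‖x‖ ^ 2 := by
  have h := hf.isBigO_sub_sub_fderiv
  have hneg : (fun x => f (-x) - f 0 - fderiv ℝ f 0 (-x)) =O[𝓝 0] fun x => ‖x‖ ^ 2 := by
    simpa [Function.comp_def] using h.comp_tendsto (continuous_neg.tendsto' (0 : E) 0 neg_zero)
  refine (h.add hneg).congr_left fun x => ?_
  rw [map_neg, two_smul]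
  abel

theorem ContDiffAt.isBigO_sub_comp_neg_sub {f : E → F} (hf : ContDiffAt ℝ 3 f 0) :
    (fun x => f x - f (-x) - (2 : ℝ) • fderiv ℝ f 0 x) =O[𝓝 0] fun x => ‖x‖ ^ 3 := by
  have hderiv : ∀ᶠ x in 𝓝 (0 : E),
      HasFDerivAt (fun x => f x - f (-x)) (fderiv ℝ f x + fderiv ℝ f (-x)) x := by
    have hneg : Tendsto (fun x : E => -x) (𝓝 0) (𝓝 0) := continuous_neg.tendsto' 0 0 neg_zero
    have hdiff := (hf.eventually (by simp)).mono fun x hx => hx.differentiableAt (by simp)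
    filter_upwards [hdiff, hneg.eventually hdiff] with x hx hnx
    convert hx.hasFDerivAt.sub (hnx.hasFDerivAt.comp x (hasFDerivAt_id x).neg) using 1 <;>
      ext v <;> simp [sub_eq_add_neg]
  have hf' := (hf.fderiv_right (m := 2) (by norm_num)).isBigO_add_comp_neg_sub
  refine ((isBigO_sub_sub_fderiv_of_isBigO hderiv ?_).congr_left fun x => ?_)
  · refine hf'.congr_left fun x => ?_
    simp only [neg_zero, two_smul]
  · simp [two_smul]

theorem ContDiffAt.isBigO_norm_sq_of_fderiv_eq_zero {φ : E → F} (hφ : ContDiffAt ℝ 2 φ 0)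
    (hφ0 : φ 0 = 0) (hDφ0 : fderiv ℝ φ 0 = 0) : φ =O[𝓝 0] fun x => ‖x‖ ^ 2 := by
  simpa [hφ0, hDφ0] using hφ.isBigO_sub_sub_fderiv

theorem ContinuousLinearMap.isBigO_norm_pow_one (ℓ : E →L[ℝ] F) :
    ℓ =O[𝓝 0] fun x => ‖x‖ ^ 1 := by
  simpa using (ℓ.isBigO_id _).norm_right

end Taylor

theorem Asymptotics.IsBigO.mul_pow_add {α : Type*} {l : Filter α} {f g n : α → ℝ} {a b : ℕ}
    (hf : f =O[l] fun x => n x ^ a) (hg : g =O[l] fun x => n x ^ b) :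
    (fun x => f x * g x) =O[l] fun x => n x ^ (a + b) := by
  simpa [pow_add] using hf.mul hg

section SmallBalls

variable {E F : Type*} [NormedAddCommGroup E] [NormedSpace ℝ E] [FiniteDimensional ℝ E]
  [MeasurableSpace E] [BorelSpace E] (μ : Measure E) [μ.IsAddHaarMeasure]
  [NormedAddCommGroup F]

theorem eventually_integrableOn_closedBall {G : E → F} (hG : ∀ᶠ x in 𝓝 0, ContinuousAt G x) :
    ∀ᶠ r in 𝓝 (0 : ℝ), IntegrableOn G (closedBall 0 r) μ := by
  obtain ⟨ε, hε, hball⟩ := Metric.eventually_nhds_iff_ball.1 hG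
  filter_upwards [Iio_mem_nhds hε] with r hr
  exact (continuousOn_of_forall_continuousAt fun x hx =>
    hball x (closedBall_subset_ball hr hx)).integrableOn_compact (isCompact_closedBall 0 r)

variable [NormedSpace ℝ F]

theorem isBigO_setIntegral_closedBall {G : E → F} {k : ℕ}
    (hG : G =O[𝓝 0] fun x => ‖x‖ ^ k) :
    (fun r : ℝ => ∫ x in closedBall 0 r, G x ∂μ) =O[𝓝[>] 0] fun r => r ^ (finrank ℝ E + k) := by
  obtain ⟨C, hC, hCG⟩ := hG.exists_nonneg
  obtain ⟨ε, hε, hball⟩ := Metric.eventually_nhds_iff_ball.1 hCG.bound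
  refine .of_bound (C * μ.real (ball 0 1)) ?_
  filter_upwards [Ioo_mem_nhdsGT hε] with r ⟨hr, hrε⟩
  have hbound : ∀ x ∈ closedBall (0 : E) r, ‖G x‖ ≤ C * r ^ k := fun x hx =>
    (hball x (closedBall_subset_ball hrε hx)).trans (by
      rw [norm_pow, norm_norm]
      gcongr
      simpa using hx)
  calc ‖∫ x in closedBall 0 r, G x ∂μ‖ ≤ C * r ^ k * μ.real (closedBall 0 r) :=
        norm_setIntegral_le_of_norm_le_const measure_closedBall_lt_top hbound
    _ = C * μ.real (ball 0 1) * ‖r ^ (finrank ℝ E + k)‖ := by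
        rw [μ.addHaar_real_closedBall 0 hr.le, Real.norm_of_nonneg (by positivity), pow_add]
        ring

theorem setIntegral_closedBall_comp_neg (G : E → F) (r : ℝ) :
    ∫ x in closedBall 0 r, G (-x) ∂μ = ∫ x in closedBall 0 r, G x ∂μ := by
  have := (Measure.measurePreserving_neg μ).setIntegral_preimage_emb
    (Homeomorph.neg E).measurableEmbedding G (closedBall 0 r)
  simpa using this

theorem norm_setIntegral_closedBall_le_half (G : E → F) (r : ℝ) :
    ‖∫ x in closedBall 0 r, G x ∂μ‖ ≤ ‖∫ x in closedBall 0 r, (G x + G (-x)) ∂μ‖ / 2 := by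
  by_cases hG : IntegrableOn G (closedBall 0 r) μ
  · have hGneg : IntegrableOn (fun x => G (-x)) (closedBall 0 r) μ := by
      simpa [Function.comp_def] using
        (Measure.measurePreserving_neg μ).integrableOn_comp_preimage
          (Homeomorph.neg E).measurableEmbedding |>.2 hG
    rw [integral_add hG hGneg, setIntegral_closedBall_comp_neg, ← two_smul ℝ, norm_smul]
    simp
  · rw [integral_undef hG, norm_zero]
    positivity

theorem isBigO_setIntegral_closedBall_of_add_comp_neg {G : E → F} {k : ℕ}
    (hG : (fun x => G x + G (-x)) =O[𝓝 0] fun x => ‖x‖ ^ k) :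
    (fun r : ℝ => ∫ x in closedBall 0 r, G x ∂μ) =O[𝓝[>] 0] fun r => r ^ (finrank ℝ E + k) :=
  (IsBigO.of_bound (1 / 2) (Eventually.of_forall fun r => by
    simpa [div_eq_inv_mul] using norm_setIntegral_closedBall_le_half μ G r)).trans
    (isBigO_setIntegral_closedBall μ hG)

theorem setIntegral_closedBall_norm_pow [Nontrivial E] (k : ℕ) {r : ℝ} (hr : 0 ≤ r) :
    ∫ x in closedBall 0 r, ‖x‖ ^ k ∂μ
      = (μ.toSphere Set.univ).toReal * r ^ (finrank ℝ E + k) / (finrank ℝ E + k) := by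
  have hdim : 0 < finrank ℝ E := Module.finrank_pos
  have hind : (closedBall (0 : E) r).indicator (fun x => ‖x‖ ^ k)
      = fun x => (Set.Iic r).indicator (fun y : ℝ => y ^ k) ‖x‖ := by
    ext x
    simp only [Set.indicator, mem_closedBall_zero_iff, Set.mem_Iic]
  have hradial : (fun y : ℝ => y ^ (finrank ℝ E - 1) • (Set.Iic r).indicator (fun y => y ^ k) y)
      = (Set.Iic r).indicator fun y => y ^ (finrank ℝ E - 1 + k) := by
    ext y
    simp [Set.indicator_apply, pow_add]
  rw [← integral_indicator measurableSet_closedBall, hind, integral_fun_norm_addHaar, hradial,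
    setIntegral_indicator measurableSet_Iic, Set.Ioi_inter_Iic,
    ← intervalIntegral.integral_of_le hr, integral_pow, Measure.toSphere_apply_univ,
    ENNReal.toReal_mul, measureReal_def]
  rw [show finrank ℝ E - 1 + k + 1 = finrank ℝ E + k by omega]
  simp only [zero_pow (by omega : finrank ℝ E + k ≠ 0), sub_zero, smul_eq_mul, nsmul_eq_mul,
    ENNReal.toReal_natCast]
  push_cast [Nat.cast_sub hdim]
  ring

theorem isBigO_setIntegral_mul_mul_sub_const_mul (ℓ₁ ℓ₂ : E →L[ℝ] ℝ) {P : E → ℝ}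
    (hP : ContDiffAt ℝ 2 P 0) :
    (fun r : ℝ => ∫ x in closedBall 0 r, ℓ₁ x * ℓ₂ x * P x ∂μ
        - P 0 * ∫ x in closedBall 0 r, ℓ₁ x * ℓ₂ x ∂μ)
      =O[𝓝[>] 0] fun r => r ^ (finrank ℝ E + 4) := by
  have heven : (fun x => ℓ₁ x * ℓ₂ x * (P x - P 0) + ℓ₁ (-x) * ℓ₂ (-x) * (P (-x) - P 0))
      =O[𝓝 0] fun x => ‖x‖ ^ (1 + 1 + 2) := by
    refine ((ℓ₁.isBigO_norm_pow_one.mul_pow_add ℓ₂.isBigO_norm_pow_one).mul_pow_add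
      hP.isBigO_add_comp_neg_sub).congr_left fun x => ?_
    simp only [map_neg, smul_eq_mul]
    ring
  have hcont : ∀ᶠ x in 𝓝 (0 : E), ContinuousAt (fun x => ℓ₁ x * ℓ₂ x * P x) x :=
    (hP.eventually (by simp)).mono fun x hx =>
      (ℓ₁.continuous.continuousAt.mul ℓ₂.continuous.continuousAt).mul hx.continuousAt
  refine (isBigO_setIntegral_closedBall_of_add_comp_neg μ heven).congr' ?_ EventuallyEq.rfl
  filter_upwards [nhdsWithin_le_nhds (eventually_integrableOn_closedBall μ hcont)] with r hr
  rw [← integral_const_mul, ← integral_sub hr]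
  · congr 1 with x
    ring
  · exact (continuous_const.mul (ℓ₁.continuous.mul ℓ₂.continuous)).continuousOn
      |>.integrableOn_compact (isCompact_closedBall 0 r)

theorem isBigO_setIntegral_mul_comp_mul_of_fderiv_eq_zero (ℓ : E →L[ℝ] ℝ) (ℓ' : F →L[ℝ] ℝ)
    {φ : E → F} (hφ : ContDiffAt ℝ 3 φ 0) (hφ0 : φ 0 = 0) (hDφ0 : fderiv ℝ φ 0 = 0)
    {P : E → ℝ} (hP : ContDiffAt ℝ 2 P 0) :
    (fun r : ℝ => ∫ x in closedBall 0 r, ℓ x * ℓ' (φ x) * P x ∂μ)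
      =O[𝓝[>] 0] fun r => r ^ (finrank ℝ E + 4) := by
  have hneg : Tendsto (fun x : E => -x) (𝓝 0) (𝓝 0) := continuous_neg.tendsto' 0 0 neg_zero
  have hφodd : (fun x => ℓ' (φ x) - ℓ' (φ (-x))) =O[𝓝 0] fun x => ‖x‖ ^ 3 := by
    simpa [hDφ0] using (ℓ'.isBigO_comp _ _).trans hφ.isBigO_sub_comp_neg_sub
  have hφneg : (fun x => ℓ' (φ (-x))) =O[𝓝 0] fun x => ‖x‖ ^ 2 := by
    simpa [Function.comp_def] using ((ℓ'.isBigO_comp _ _).trans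
      ((hφ.of_le (by norm_num)).isBigO_norm_sq_of_fderiv_eq_zero hφ0 hDφ0)).comp_tendsto hneg
  have hPodd : (fun x => P x - P (-x)) =O[𝓝 0] fun x => ‖x‖ ^ 1 := by
    have h : (fun x => P x - P 0) =O[𝓝 0] fun x => ‖x‖ ^ 1 := by
      simpa using ((hP.differentiableAt (by simp)).isBigO_sub).norm_right
    have hcomp := h.comp_tendsto hneg
    simp only [Function.comp_def, norm_neg] at hcomp
    refine (h.sub hcomp).congr (fun x => ?_) fun x => ?_ <;> simp
  have hodd : (fun x => ℓ' (φ x) * P x - ℓ' (φ (-x)) * P (-x))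
      =O[𝓝 0] fun x => ‖x‖ ^ (3 + 0) := by
    have hPbdd : P =O[𝓝 0] fun x => ‖x‖ ^ 0 := by simpa using hP.continuousAt.isBigO_one ℝ
    refine ((hφodd.mul_pow_add hPbdd).add (hφneg.mul_pow_add hPodd)).congr_left fun x => ?_
    ring
  refine isBigO_setIntegral_closedBall_of_add_comp_neg μ
    ((ℓ.isBigO_norm_pow_one.mul_pow_add hodd).congr_left fun x => ?_)
  simp only [map_neg]
  ring

theorem isBigO_setIntegral_comp_mul_comp_mul_of_fderiv_eq_zero (ℓ₁ ℓ₂ : F →L[ℝ] ℝ)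
    {φ : E → F} (hφ : ContDiffAt ℝ 2 φ 0) (hφ0 : φ 0 = 0) (hDφ0 : fderiv ℝ φ 0 = 0)
    {P : E → ℝ} (hP : ContinuousAt P 0) :
    (fun r : ℝ => ∫ x in closedBall 0 r, ℓ₁ (φ x) * ℓ₂ (φ x) * P x ∂μ)
      =O[𝓝[>] 0] fun r => r ^ (finrank ℝ E + 4) := by
  have hφ2 := hφ.isBigO_norm_sq_of_fderiv_eq_zero hφ0 hDφ0
  have hPbdd : P =O[𝓝 0] fun x => ‖x‖ ^ 0 := by simpa using hP.isBigO_one ℝ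
  exact isBigO_setIntegral_closedBall μ ((((ℓ₁.isBigO_comp _ _).trans hφ2).mul_pow_add
    ((ℓ₂.isBigO_comp _ _).trans hφ2)).mul_pow_add hPbdd)

end SmallBalls

section Moments

variable {ι : Type*} [Fintype ι]

theorem setIntegral_closedBall_comp_linearIsometryEquiv
    (e : EuclideanSpace ℝ ι ≃ₗᵢ[ℝ] EuclideanSpace ℝ ι) (G : EuclideanSpace ℝ ι → ℝ) (r : ℝ) :
    ∫ u in closedBall 0 r, G (e u) = ∫ u in closedBall 0 r, G u := by
  have := e.measurePreserving.setIntegral_preimage_emb e.toHomeomorph.measurableEmbedding G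
    (closedBall 0 r)
  rwa [e.preimage_closedBall, map_zero] at this

theorem setIntegral_closedBall_coord_mul_coord_of_ne [DecidableEq ι] {i j : ι} (hij : i ≠ j)
    (r : ℝ) : ∫ u in closedBall (0 : EuclideanSpace ℝ ι) r, u i * u j = 0 := by
  let e : EuclideanSpace ℝ ι ≃ₗᵢ[ℝ] EuclideanSpace ℝ ι := LinearIsometryEquiv.piLpCongrRight 2
    fun k => if k = i then LinearIsometryEquiv.neg ℝ else LinearIsometryEquiv.refl ℝ ℝ
  have he : ∀ u : EuclideanSpace ℝ ι, e u i * e u j = -(u i * u j) := fun u => by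
    simp [e, Ne.symm hij]
  have := setIntegral_closedBall_comp_linearIsometryEquiv e (fun u => u i * u j) r
  simp only [he, integral_neg] at this
  linarith

theorem setIntegral_closedBall_coord_sq_eq [DecidableEq ι] (i j : ι) (r : ℝ) :
    ∫ u in closedBall (0 : EuclideanSpace ℝ ι) r, u i ^ 2
      = ∫ u in closedBall (0 : EuclideanSpace ℝ ι) r, u j ^ 2 := by
  have := setIntegral_closedBall_comp_linearIsometryEquiv
    (LinearIsometryEquiv.piLpCongrLeft 2 ℝ ℝ (Equiv.swap i j)) (fun u => u i ^ 2) r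
  simpa [Equiv.swap_apply_left] using this.symm

theorem setIntegral_closedBall_coord_sq {d : ℕ} (i : Fin d) {r : ℝ} (hr : 0 ≤ r) :
    ∫ u in closedBall (0 : EuclideanSpace ℝ (Fin d)) r, u i ^ 2
      = sphereArea d / (d * (d + 2)) * r ^ (d + 2) := by
  have : Nontrivial (EuclideanSpace ℝ (Fin d)) := by
    have := i.pos; exact Module.nontrivial_of_finrank_pos (R := ℝ) (by simpa)
  have hint : ∀ k : Fin d, IntegrableOn (fun u : EuclideanSpace ℝ (Fin d) => u k ^ 2)
      (closedBall 0 r) :=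
    fun k => ((EuclideanSpace.proj k).continuous.pow 2).continuousOn.integrableOn_compact
      (isCompact_closedBall _ _)
  have hsum := integral_finsetSum Finset.univ fun k _ => hint k
  simp only [← EuclideanSpace.real_norm_sq_eq, fun k => setIntegral_closedBall_coord_sq_eq k i,
    Finset.sum_const, Finset.card_univ, Fintype.card_fin, nsmul_eq_mul,
    setIntegral_closedBall_norm_pow volume 2 hr, finrank_euclideanSpace_fin,
    Nat.cast_ofNat] at hsum
  have hd : (d : ℝ) ≠ 0 := by have := i.pos; positivity
  rw [sphereArea]
  field_simp at hsum ⊢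
  linarith

theorem setIntegral_closedBall_coord_mul_coord {d : ℕ} (i j : Fin d) {r : ℝ} (hr : 0 ≤ r) :
    ∫ u in closedBall (0 : EuclideanSpace ℝ (Fin d)) r, u i * u j
      = if i = j then sphereArea d / (d * (d + 2)) * r ^ (d + 2) else 0 := by
  split_ifs with hij
  · simpa [hij, ← pow_two] using setIntegral_closedBall_coord_sq j hr
  · exact setIntegral_closedBall_coord_mul_coord_of_ne hij r

end Moments

theorem graph_local_covariance_matrix_expansion_general
    (d p : ℕ)
    (φ : EuclideanSpace ℝ (Fin d) → EuclideanSpace ℝ (Fin (p - d)))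
    (U : Set (EuclideanSpace ℝ (Fin d))) (hU : U ∈ 𝓝 (0 : EuclideanSpace ℝ (Fin d)))
    (hφ : ContDiffOn ℝ 3 φ U) (hφ0 : φ 0 = 0) (hDφ0 : fderiv ℝ φ 0 = 0)
    (P : EuclideanSpace ℝ (Fin d) → ℝ)
    (V : Set (EuclideanSpace ℝ (Fin d))) (hV : V ∈ 𝓝 (0 : EuclideanSpace ℝ (Fin d)))
    (hP : ContDiffOn ℝ 2 P V) :
    ∀ a b : Fin d ⊕ Fin (p - d),
      (fun h : ℝ =>
          (∫ u in closedBall (0 : EuclideanSpace ℝ (Fin d)) h,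
              Sum.elim (fun i => u i) (fun j => φ u j) a *
                Sum.elim (fun i => u i) (fun j => φ u j) b * P u)
            - sphereArea d * P 0 / (d * (d + 2)) * h ^ (d + 2) *
                Matrix.diagonal (Sum.elim (fun _ => (1 : ℝ)) fun _ => 0) a b)
        =O[𝓝[>] (0 : ℝ)] fun h => h ^ (d + 4) := by
  have hφ' := hφ.contDiffAt hU
  have hP' := hP.contDiffAt hV
  intro a b
  rcases a with i | i <;> rcases b with j | j
  · refine (isBigO_setIntegral_mul_mul_sub_const_mul volume (EuclideanSpace.proj i)
      (EuclideanSpace.proj j) hP').congr' ?_ (by simp)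
    filter_upwards [self_mem_nhdsWithin] with r hr
    simp only [PiLp.proj_apply, setIntegral_closedBall_coord_mul_coord i j (le_of_lt hr),
      Sum.elim_inl, Matrix.diagonal_apply, Sum.inl.injEq]
    split_ifs <;> ring
  · simpa using isBigO_setIntegral_mul_comp_mul_of_fderiv_eq_zero volume
      (EuclideanSpace.proj i) (EuclideanSpace.proj j) hφ' hφ0 hDφ0 hP'
  · simpa [mul_comm] using isBigO_setIntegral_mul_comp_mul_of_fderiv_eq_zero volume
      (EuclideanSpace.proj j) (EuclideanSpace.proj i) hφ' hφ0 hDφ0 hP'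
  · simpa [Matrix.diagonal_apply] using isBigO_setIntegral_comp_mul_comp_mul_of_fderiv_eq_zero
      volume (EuclideanSpace.proj i) (EuclideanSpace.proj j) (hφ'.of_le (by norm_num)) hφ0 hDφ0
      hP'.continuousAt

/-- graph-parametrized local covariance matrix.  For a `d`-dim
graph `u ↦ (u, φ(u)) ∈ ℝ^p` (`p = d + (p−d)`, tangent at the origin equal to
`ℝ^d × {0}`), with density `P`, the local covariance matrix
`C_h = ∫_{‖u‖≤h} v(u)v(u)ᵀ P(u) du` satisfies, as `h → 0⁺` and entrywise,
`C_h = (|S^{d-1}|·P(0)/(d(d+2)))·h^{d+2}·J + O(h^{d+4})`, where `J` is the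
diagonal matrix with `1` on the first `d` diagonal entries and `0` on the
remaining `p−d` ones. -/
theorem graph_local_covariance_matrix_expansion
    (d p : ℕ) (hd : 1 ≤ d) (hdp : d < p)
    (φ : EuclideanSpace ℝ (Fin d) → EuclideanSpace ℝ (Fin (p - d)))
    (U : Set (EuclideanSpace ℝ (Fin d))) (hU : U ∈ 𝓝 (0 : EuclideanSpace ℝ (Fin d)))
    (hφ : ContDiffOn ℝ 3 φ U) (hφ0 : φ 0 = 0) (hDφ0 : fderiv ℝ φ 0 = 0)
    (P : EuclideanSpace ℝ (Fin d) → ℝ)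
    (V : Set (EuclideanSpace ℝ (Fin d))) (hV : V ∈ 𝓝 (0 : EuclideanSpace ℝ (Fin d)))
    (hP : ContDiffOn ℝ 2 P V) :
    ∀ a b : Fin d ⊕ Fin (p - d),
      (fun h : ℝ =>
          (∫ u in closedBall (0 : EuclideanSpace ℝ (Fin d)) h,
              Sum.elim (fun i => u i) (fun j => φ u j) a *
                Sum.elim (fun i => u i) (fun j => φ u j) b * P u)
            - sphereArea d * P 0 / (d * (d + 2)) * h ^ (d + 2) *
                Matrix.diagonal (Sum.elim (fun _ => (1 : ℝ)) fun _ => 0) a b)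
        =O[𝓝[>] (0 : ℝ)] fun h => h ^ (d + 4) :=
  graph_local_covariance_matrix_expansion_general d p φ U hU hφ hφ0 hDφ0 P V hV hP
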